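/- Forward transform representation for the curl-free part: for a sequence of vectors T_k = (T_k^(1), T_k^(2), T_k^(3)) ∈ ℝ³, quadrature rule {(w_k, x_k)}, and with D_{±1,ℓ,m}, D_{0,ℓ,m} defined via CG coefficients and scalar spherical harmonics, the sum b̃_{ℓ,m} := Σ_k w_k y_{ℓ,m}*(x_k) T_k (where y_{ℓ,m} is the curl-free vector spherical harmonic) equals -(i/√2)[μ^(1)_{ℓ,m-1}(-F_{ℓ,m-1}(T^(1)) + i F_{ℓ,m-1}(T^(2))) + μ^(3)_{ℓ,m+1}(F_{ℓ,m+1}(T^(1)) + i F_{ℓ,m+1}(T^(2)))] - i μ^(2)_{ℓ,m} F_{ℓ,m}(T^(3)), where F_{ℓ,m}(f) := Σ_k w_k f_k conj(Y_{ℓ,m}(x_k)). -/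

import Mathlib

open Complex Finset

abbrev Sph2 := Metric.sphere (0 : EuclideanSpace ℝ (Fin 3)) 1

/- `-(p - q)/√2`, `-i(p + q)/√2`, `d` are the Cartesian components of `p e₊₁ + d e₀ + q e₋₁`. -/
theorem conj_sphericalBasis_dot (p q d : ℂ) (t₁ t₂ t₃ : ℝ) :
    starRingEnd ℂ (-(1 / Real.sqrt 2 : ℝ) * (p - q)) * t₁ +
        starRingEnd ℂ (-((1 / Real.sqrt 2 : ℝ) * I) * (p + q)) * t₂ +
        starRingEnd ℂ d * t₃ =
      (1 / Real.sqrt 2 : ℝ) * (starRingEnd ℂ p * (-t₁ + I * t₂) +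
        starRingEnd ℂ q * (t₁ + I * t₂)) + starRingEnd ℂ d * t₃ := by
  simp only [map_mul, map_neg, map_sub, map_add, conj_ofReal, conj_I]
  ring

theorem conj_I_mul_ofReal_mul (μ : ℝ) (z : ℂ) :
    starRingEnd ℂ (I * μ * z) = -I * μ * starRingEnd ℂ z := by
  simp only [map_mul, conj_I, conj_ofReal]

theorem fwd_curlfree_via_scalar_general (N : ℕ)
    (w : Fin N → ℝ) (x : Fin N → Sph2)
    (T1 T2 T3 : Fin N → ℝ)
    (Y : ℤ → ℤ → Sph2 → ℂ)
    (C : ℤ → ℤ → ℤ → ℤ → ℤ → ℤ → ℝ)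
    (ℓ m : ℤ)
    (Dp D0 Dm : Sph2 → ℂ)
    (hDp : ∀ s, Dp s = Complex.I * (C ℓ (m - 1) 1 1 ℓ m : ℝ) * Y ℓ (m - 1) s)
    (hD0 : ∀ s, D0 s = Complex.I * (C ℓ m 1 0 ℓ m : ℝ) * Y ℓ m s)
    (hDm : ∀ s, Dm s = Complex.I * (C ℓ (m + 1) 1 (-1) ℓ m : ℝ) * Y ℓ (m + 1) s)
    (y : Sph2 → Fin 3 → ℂ)
    (hy : ∀ s, y s = ![-(1 / Real.sqrt 2 : ℝ) * (Dp s - Dm s),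
      -((1 / Real.sqrt 2 : ℝ) * Complex.I) * (Dp s + Dm s), D0 s])
    (F : ℤ → ℤ → (Fin N → ℝ) → ℂ)
    (hF : ∀ ℓ' m' f, F ℓ' m' f =
      ∑ k, (w k : ℂ) * (f k : ℝ) * (starRingEnd ℂ) (Y ℓ' m' (x k))) :
    (∑ k, (w k : ℂ) * ((starRingEnd ℂ) (y (x k) 0) * (T1 k : ℝ) +
        (starRingEnd ℂ) (y (x k) 1) * (T2 k : ℝ) +
        (starRingEnd ℂ) (y (x k) 2) * (T3 k : ℝ))) =
      -((1 / Real.sqrt 2 : ℝ) * Complex.I) *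
          ((C ℓ (m - 1) 1 1 ℓ m : ℝ) * (-(F ℓ (m - 1) T1) + Complex.I * F ℓ (m - 1) T2) +
            (C ℓ (m + 1) 1 (-1) ℓ m : ℝ) * (F ℓ (m + 1) T1 + Complex.I * F ℓ (m + 1) T2)) -
        Complex.I * (C ℓ m 1 0 ℓ m : ℝ) * F ℓ m T3 := by
  simp only [hF, mul_sum, ← sum_neg_distrib, ← sum_add_distrib, ← sum_sub_distrib]
  refine sum_congr rfl fun k _ => ?_
  simp only [hy, Matrix.cons_val_zero, Matrix.cons_val_one, Matrix.cons_val_two,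
    Matrix.head_cons, Matrix.tail_cons]
  rw [conj_sphericalBasis_dot, hDp, hD0, hDm, conj_I_mul_ofReal_mul, conj_I_mul_ofReal_mul,
    conj_I_mul_ofReal_mul]
  ring

/-- Forward-transform representation for the curl-free part.
For vectors `T_k = (T_k⁽¹⁾, T_k⁽²⁾, T_k⁽³⁾) ∈ ℝ³`, a quadrature rule `{(w_k, x_k)}`, and
the curl-free vector spherical harmonic
`y_{ℓ,m} = D_{+1,ℓ,m} e_{+1} + D_{0,ℓ,m} e_0 + D_{-1,ℓ,m} e_{-1}` with
`D_{+1,ℓ,m} = i C^{ℓ,m}_{ℓ,m-1,1,1} Y_{ℓ,m-1}`, `D_{0,ℓ,m} = i C^{ℓ,m}_{ℓ,m,1,0} Y_{ℓ,m}`,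
`D_{-1,ℓ,m} = i C^{ℓ,m}_{ℓ,m+1,1,-1} Y_{ℓ,m+1}`, the sum
`b̃_{ℓ,m} = Σ_k w_k y_{ℓ,m}*(x_k) T_k` equals
`-(i/√2)[μ⁽¹⁾_{ℓ,m-1}(-F_{ℓ,m-1}(T⁽¹⁾) + i F_{ℓ,m-1}(T⁽²⁾))
 + μ⁽³⁾_{ℓ,m+1}(F_{ℓ,m+1}(T⁽¹⁾) + i F_{ℓ,m+1}(T⁽²⁾))] - i μ⁽²⁾_{ℓ,m} F_{ℓ,m}(T⁽³⁾)`,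
where `F_{ℓ,m}(f) = Σ_k w_k f_k conj(Y_{ℓ,m}(x_k))`, `μ⁽¹⁾_{ℓ,m-1} = C^{ℓ,m}_{ℓ,m-1,1,1}`,
`μ⁽²⁾_{ℓ,m} = C^{ℓ,m}_{ℓ,m,1,0}`, `μ⁽³⁾_{ℓ,m+1} = C^{ℓ,m}_{ℓ,m+1,1,-1}`.
Here `C j1 m1 j2 m2 ℓ m` denotes the CG coefficient `C^{ℓ,m}_{j1,m1,j2,m2}` and
`Y ℓ m` the scalar spherical harmonic `Y_{ℓ,m}`. -/
theorem fwd_curlfree_via_scalar (N : ℕ)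
    (w : Fin N → ℝ) (x : Fin N → Sph2)
    (T1 T2 T3 : Fin N → ℝ)
    (Y : ℤ → ℤ → Sph2 → ℂ)
    (C : ℤ → ℤ → ℤ → ℤ → ℤ → ℤ → ℝ)
    (ℓ m : ℤ) (hℓ : 1 ≤ ℓ) (hm₁ : -ℓ ≤ m) (hm₂ : m ≤ ℓ)
    (Dp D0 Dm : Sph2 → ℂ)
    (hDp : ∀ s, Dp s = Complex.I * (C ℓ (m - 1) 1 1 ℓ m : ℝ) * Y ℓ (m - 1) s)
    (hD0 : ∀ s, D0 s = Complex.I * (C ℓ m 1 0 ℓ m : ℝ) * Y ℓ m s)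
    (hDm : ∀ s, Dm s = Complex.I * (C ℓ (m + 1) 1 (-1) ℓ m : ℝ) * Y ℓ (m + 1) s)
    (y : Sph2 → Fin 3 → ℂ)
    (hy : ∀ s, y s = ![-(1 / Real.sqrt 2 : ℝ) * (Dp s - Dm s),
      -((1 / Real.sqrt 2 : ℝ) * Complex.I) * (Dp s + Dm s), D0 s])
    (F : ℤ → ℤ → (Fin N → ℝ) → ℂ)
    (hF : ∀ ℓ' m' f, F ℓ' m' f =
      ∑ k, (w k : ℂ) * (f k : ℝ) * (starRingEnd ℂ) (Y ℓ' m' (x k))) :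
    (∑ k, (w k : ℂ) * ((starRingEnd ℂ) (y (x k) 0) * (T1 k : ℝ) +
        (starRingEnd ℂ) (y (x k) 1) * (T2 k : ℝ) +
        (starRingEnd ℂ) (y (x k) 2) * (T3 k : ℝ))) =
      -((1 / Real.sqrt 2 : ℝ) * Complex.I) *
          ((C ℓ (m - 1) 1 1 ℓ m : ℝ) * (-(F ℓ (m - 1) T1) + Complex.I * F ℓ (m - 1) T2) +
            (C ℓ (m + 1) 1 (-1) ℓ m : ℝ) * (F ℓ (m + 1) T1 + Complex.I * F ℓ (m + 1) T2)) -
        Complex.I * (C ℓ m 1 0 ℓ m : ℝ) * F ℓ m T3 :=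
  fwd_curlfree_via_scalar_general N w x T1 T2 T3 Y C ℓ m Dp D0 Dm hDp hD0 hDm y hy F hF
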